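/- arXiv:2512.06980 — 3 statements merged into one kernel-verified Lean document; each statement's English description precedes it below -/
import Mathlib

section
/- For n ≥ 1, the number of proper partitions of the complete bipartite graph K_{n,n} into exactly 4 independent sets equals 2 − 2^{n+1} + 3^{n−1} + 4^{n−1}, i.e., the sum over j = 1 to 3 of S(n,j)·S(n,4−j) equals 2 − 2^{n+1} + 3^{n−1} + 4^{n−1}. -/
/-!
A proper partition of `K_{n,n}` has every part inside one side, so a proper partition into `4`
parts is the same as a pair of partitions of the two sides into `j` and `4 - j` parts. Partitions
of a finite set into `k` parts are counted by `stirling`: deleting one element `a` leaves a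
partition of the rest, in which `a` was either a singleton part or had been added to one of the
`k` parts. The closed form follows from `S(m+1, 1) = 1`, `S(m+1, 2) = 2^m - 1` and
`2 S(m+1, 3) = 3^m - 2^(m+1) + 1`.
-/

/-- Stirling numbers of the second kind. -/
def stirling : ℕ → ℕ → ℕ
  | 0, 0 => 1
  | 0, _ + 1 => 0
  | _ + 1, 0 => 0
  | n + 1, k + 1 => (k + 1) * stirling n (k + 1) + stirling n k

open Finset

lemma Finset.insert_inter_eq_of_notMem_of_subset {α : Type*} [DecidableEq α] {a : α}
    {s t : Finset α} (ha : a ∉ t) (hst : s ⊆ t) : insert a s ∩ t = s := by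
  rw [insert_inter_of_notMem ha, inter_eq_left.2 hst]

namespace Finpartition

variable {α : Type*} [DecidableEq α]

lemma mem_parts_restrict {s b : Finset α} (P : Finpartition s) (hb : b ⊆ s) {q : Finset α} :
    q ∈ (P.restrict hb).parts ↔ q ≠ ∅ ∧ ∃ d ∈ P.parts, d ∩ b = q := by
  simp [restrict, and_comm]

lemma parts_restrict_of_forall {s b : Finset α} (P : Finpartition s) (hb : b ⊆ s)
    (h : ∀ p ∈ P.parts, p ⊆ b ∨ Disjoint p b) :
    (P.restrict hb).parts = {p ∈ P.parts | p ⊆ b} := by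
  ext q
  rw [mem_parts_restrict, mem_filter]
  constructor
  · rintro ⟨hq, d, hd, rfl⟩
    rcases h d hd with hdb | hdb
    · rw [inter_eq_left.2 hdb]
      exact ⟨hd, hdb⟩
    · exact absurd (disjoint_iff_inter_eq_empty.1 hdb) hq
  · rintro ⟨hq, hqb⟩
    exact ⟨P.ne_empty hq, q, hq, inter_eq_left.2 hqb⟩

section InsertPart

variable {t : Finset α} {a : α}

/-- For `p = ∅` the new part is `{a}`; otherwise `a` joins the part `p`. -/
def insertPart (Q : Finpartition t) (ha : a ∉ t) (p : Finset α)
    (hp : p = ∅ ∨ p ∈ Q.parts) : Finpartition (insert a t) where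
  parts := insert (insert a p) (Q.parts.erase p)
  supIndep := by
    rw [supIndep_iff_pairwiseDisjoint, coe_insert]
    refine (Q.disjoint.subset (coe_subset.2 (erase_subset p Q.parts))).insert fun q hq _ ↦ ?_
    obtain ⟨hqp, hq⟩ := mem_erase.1 hq
    refine disjoint_insert_left.2 ⟨fun haq ↦ ha (Q.le hq haq), ?_⟩
    rcases hp with rfl | hp
    · exact disjoint_empty_left q
    · exact Q.disjoint hp hq (Ne.symm hqp)
  sup_parts := by
    rw [sup_insert, id, sup_eq_union, insert_union]
    congr 1
    rcases hp with rfl | hp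
    · rw [erase_eq_of_notMem Q.empty_notMem_parts, empty_union, Q.sup_parts]
    · conv_rhs => rw [← Q.sup_parts, ← insert_erase hp, sup_insert]
      rfl
  bot_notMem := by
    rw [mem_insert, not_or]
    exact ⟨(insert_ne_empty a p).symm, fun h ↦ Q.bot_notMem (mem_of_mem_erase h)⟩

variable {Q : Finpartition t} {ha : a ∉ t} {p : Finset α}

lemma subset_of_eq_empty_or_mem_parts (hp : p = ∅ ∨ p ∈ Q.parts) : p ⊆ t := by
  rcases hp with rfl | hp
  exacts [empty_subset t, Q.le hp]

lemma part_insertPart (hp : p = ∅ ∨ p ∈ Q.parts) :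
    (Q.insertPart ha p hp).part a = insert a p :=
  part_eq_of_mem _ (mem_insert_self _ _) (mem_insert_self a p)

lemma restrict_insertPart (hp : p = ∅ ∨ p ∈ Q.parts) :
    (Q.insertPart ha p hp).restrict (subset_insert a t) = Q := by
  ext q
  simp only [mem_parts_restrict, insertPart, exists_mem_insert,
    insert_inter_eq_of_notMem_of_subset ha (subset_of_eq_empty_or_mem_parts hp)]
  constructor
  · rintro ⟨hq, rfl | ⟨d, hd, rfl⟩⟩
    · exact hp.resolve_left hq
    · rw [inter_eq_left.2 (Q.le (mem_of_mem_erase hd))]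
      exact mem_of_mem_erase hd
  · intro hq
    refine ⟨Q.ne_empty hq, ?_⟩
    by_cases hqp : p = q
    · exact Or.inl hqp
    · exact Or.inr ⟨q, mem_erase.2 ⟨Ne.symm hqp, hq⟩, inter_eq_left.2 (Q.le hq)⟩

lemma card_parts_insertPart (hp : p = ∅ ∨ p ∈ Q.parts) :
    #(Q.insertPart ha p hp).parts = #(insert p Q.parts) := by
  have hnew : insert a p ∉ Q.parts.erase p := fun h ↦
    ha (Q.le (mem_of_mem_erase h) (mem_insert_self a p))
  rw [insertPart, card_insert_of_notMem hnew, ← erase_insert_eq_erase,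
    card_erase_add_one (mem_insert_self p _)]

lemma part_inter_eq_empty_or_mem_parts_restrict (P : Finpartition (insert a t)) :
    P.part a ∩ t = ∅ ∨ P.part a ∩ t ∈ (P.restrict (subset_insert a t)).parts := by
  rw [or_iff_not_imp_left, mem_parts_restrict]
  exact fun h ↦ ⟨h, P.part a, P.part_mem.2 (mem_insert_self a t), rfl⟩

lemma insertPart_restrict (ha : a ∉ t) (P : Finpartition (insert a t)) :
    (P.restrict (subset_insert a t)).insertPart ha (P.part a ∩ t)
      (part_inter_eq_empty_or_mem_parts_restrict P) = P := by
  have hpartP : P.part a ∈ P.parts := P.part_mem.2 (mem_insert_self a t)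
  have hpart : insert a (P.part a ∩ t) = P.part a := by
    rw [insert_inter_distrib, insert_eq_of_mem (P.mem_part_self.2 (mem_insert_self a t)),
      inter_eq_left.2 (P.part_subset a)]
  have hother : ∀ d ∈ P.parts, d ≠ P.part a → d ∩ t = d := fun d hd hne ↦
    inter_eq_left.2 <| (subset_insert_iff_of_notMem fun had ↦
      hne (P.part_eq_of_mem hd had).symm).1 (P.le hd)
  ext x
  simp only [insertPart, hpart, mem_insert, mem_erase, mem_parts_restrict]
  constructor
  · rintro (rfl | ⟨hx, -, d, hd, rfl⟩)
    · exact hpartP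
    · by_cases hda : d = P.part a
      · exact absurd (by rw [hda]) hx
      · rwa [hother d hd hda]
  · intro hx
    refine or_iff_not_imp_left.2 fun hxa ↦
      ⟨fun hxt ↦ hxa ?_, P.ne_empty hx, x, hx, hother x hx hxa⟩
    obtain ⟨y, hy⟩ := P.nonempty_of_mem_parts hx
    exact P.eq_of_mem_parts hx hpartP hy (mem_of_mem_inter_left (hxt ▸ hy))

variable (ha) in
noncomputable def insertPartEquiv :
    (Σ Q : Finpartition t, ↥(insert ∅ Q.parts)) ≃ Finpartition (insert a t) :=
  Equiv.ofBijective (fun x ↦ x.1.insertPart ha x.2 (mem_insert.1 x.2.2)) <| by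
    constructor
    · rintro ⟨Q, p, hp⟩ ⟨Q', p', hp'⟩ h
      have hQ : Q = Q' := by
        simpa only [restrict_insertPart] using congrArg (·.restrict (subset_insert a t)) h
      have hp : p = p' := by
        have hpart := congrArg (·.part a ∩ t) h
        simp only [part_insertPart] at hpart
        rwa [insert_inter_eq_of_notMem_of_subset ha
            (subset_of_eq_empty_or_mem_parts (mem_insert.1 hp)),
          insert_inter_eq_of_notMem_of_subset ha
            (subset_of_eq_empty_or_mem_parts (mem_insert.1 hp'))] at hpart
      exact Sigma.subtype_ext hQ hp
    · intro P
      exact ⟨⟨_, _, mem_insert.2 (part_inter_eq_empty_or_mem_parts_restrict P)⟩,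
        insertPart_restrict ha P⟩

lemma card_parts_insertPartEquiv (x : Σ Q : Finpartition t, ↥(insert ∅ Q.parts)) :
    #(insertPartEquiv ha x).parts = #(insert x.2.1 x.1.parts) :=
  card_parts_insertPart (ha := ha) (mem_insert.1 x.2.2)

theorem card_filter_card_parts_insert (ha : a ∉ t) (k : ℕ) :
    #{P : Finpartition (insert a t) | #P.parts = k + 1} =
      #{Q : Finpartition t | #Q.parts = k} +
        (k + 1) * #{Q : Finpartition t | #Q.parts = k + 1} := by
  simp only [card_filter]
  rw [← (insertPartEquiv ha).sum_comp, Fintype.sum_sigma]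
  simp only [card_parts_insertPartEquiv]
  rw [Finset.mul_sum, ← sum_add_distrib]
  refine sum_congr rfl fun Q _ ↦ ?_
  rw [sum_coe_sort (insert ∅ Q.parts) (fun p ↦ if #(insert p Q.parts) = k + 1 then 1 else 0),
    sum_insert Q.empty_notMem_parts, card_insert_of_notMem Q.empty_notMem_parts,
    sum_congr rfl fun p hp ↦ by rw [insert_eq_of_mem hp], sum_const, smul_eq_mul]
  by_cases h : #Q.parts = k + 1 <;> simp [h]

end InsertPart

theorem card_filter_card_parts_eq_stirling (s : Finset α) (k : ℕ) :
    #{P : Finpartition s | #P.parts = k} = stirling #s k := by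
  induction s using Finset.induction_on generalizing k with
  | empty =>
    have hparts (P : Finpartition (∅ : Finset α)) : #P.parts = 0 := by simp
    cases k with
    | zero =>
      simpa [hparts, stirling] using Fintype.card_unique (α := Finpartition (⊥ : Finset α))
    | succ k => simp [hparts, stirling]
  | insert a t ha ih =>
    rw [card_insert_of_notMem ha]
    cases k with
    | zero =>
      have hparts (P : Finpartition (insert a t)) : #P.parts ≠ 0 := by simp
      simp [hparts, stirling]
    | succ k =>
      rw [card_filter_card_parts_insert ha, ih, ih, stirling]
      ring

section DisjUnion

variable {s t : Finset α}

def disjUnion (P : Finpartition s) (Q : Finpartition t) (hst : Disjoint s t) :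
    Finpartition (s ∪ t) where
  parts := P.parts ∪ Q.parts
  supIndep := by
    rw [supIndep_iff_pairwiseDisjoint, coe_union, Set.pairwiseDisjoint_union]
    exact ⟨P.disjoint, Q.disjoint, fun p hp q hq _ ↦ hst.mono (P.le hp) (Q.le hq)⟩
  sup_parts := by rw [sup_union, P.sup_parts, Q.sup_parts, sup_eq_union]
  bot_notMem := by
    rw [mem_union, not_or]
    exact ⟨P.bot_notMem, Q.bot_notMem⟩

@[simp]
lemma parts_disjUnion (P : Finpartition s) (Q : Finpartition t) (hst : Disjoint s t) :
    (P.disjUnion Q hst).parts = P.parts ∪ Q.parts :=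
  rfl

lemma card_parts_disjUnion (hst : Disjoint s t) (P : Finpartition s) (Q : Finpartition t) :
    #(P.disjUnion Q hst).parts = #P.parts + #Q.parts := by
  refine card_union_of_disjoint (disjoint_left.2 fun p hpP hpQ ↦ P.ne_empty hpP ?_)
  exact disjoint_self.1 (hst.mono (P.le hpP) (Q.le hpQ))

lemma forall_subset_or_subset_disjUnion (hst : Disjoint s t) (P : Finpartition s)
    (Q : Finpartition t) : ∀ p ∈ (P.disjUnion Q hst).parts, p ⊆ s ∨ p ⊆ t := fun _ hp ↦
  (mem_union.1 hp).imp (fun hp ↦ P.le hp) fun hp ↦ Q.le hp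

lemma filter_subset_parts_self (P : Finpartition s) : P.parts.filter (· ⊆ s) = P.parts :=
  filter_true_of_mem fun _ ↦ P.le

lemma filter_subset_parts_of_disjoint {b : Finset α} (P : Finpartition s) (hsb : Disjoint s b) :
    P.parts.filter (· ⊆ b) = ∅ :=
  filter_false_of_mem fun _ hp hpb ↦ P.ne_empty hp (disjoint_self.1 (hsb.mono (P.le hp) hpb))

lemma parts_restrict_left (hst : Disjoint s t) {R : Finpartition (s ∪ t)}
    (hR : ∀ p ∈ R.parts, p ⊆ s ∨ p ⊆ t) :
    (R.restrict subset_union_left).parts = {p ∈ R.parts | p ⊆ s} :=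
  parts_restrict_of_forall R _ fun p hp ↦
    (hR p hp).imp_right fun hpt ↦ Disjoint.mono_left hpt hst.symm

lemma parts_restrict_right (hst : Disjoint s t) {R : Finpartition (s ∪ t)}
    (hR : ∀ p ∈ R.parts, p ⊆ s ∨ p ⊆ t) :
    (R.restrict subset_union_right).parts = {p ∈ R.parts | p ⊆ t} :=
  parts_restrict_of_forall R _ fun p hp ↦
    (hR p hp).symm.imp_right fun hps ↦ Disjoint.mono_left hps hst

lemma restrict_disjUnion_left (hst : Disjoint s t) (P : Finpartition s) (Q : Finpartition t) :
    (P.disjUnion Q hst).restrict subset_union_left = P := by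
  ext1
  rw [parts_restrict_left hst (forall_subset_or_subset_disjUnion hst P Q), parts_disjUnion,
    filter_union, filter_subset_parts_self, filter_subset_parts_of_disjoint Q hst.symm,
    union_empty]

lemma restrict_disjUnion_right (hst : Disjoint s t) (P : Finpartition s) (Q : Finpartition t) :
    (P.disjUnion Q hst).restrict subset_union_right = Q := by
  ext1
  rw [parts_restrict_right hst (forall_subset_or_subset_disjUnion hst P Q), parts_disjUnion,
    filter_union, filter_subset_parts_self, filter_subset_parts_of_disjoint P hst, empty_union]

lemma disjUnion_restrict (hst : Disjoint s t) {R : Finpartition (s ∪ t)}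
    (hR : ∀ p ∈ R.parts, p ⊆ s ∨ p ⊆ t) :
    (R.restrict subset_union_left).disjUnion (R.restrict subset_union_right) hst = R := by
  ext1
  rw [parts_disjUnion, parts_restrict_left hst hR, parts_restrict_right hst hR, ← filter_or,
    filter_true_of_mem hR]

lemma card_filter_forall_subset_or_subset_eq_card_pairs (hst : Disjoint s t) (k : ℕ) :
    #{R : Finpartition (s ∪ t) | (∀ p ∈ R.parts, p ⊆ s ∨ p ⊆ t) ∧ #R.parts = k} =
      #{x : Finpartition s × Finpartition t | #x.1.parts + #x.2.parts = k} := by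
  refine card_nbij' (fun R ↦ (R.restrict subset_union_left, R.restrict subset_union_right))
    (fun x ↦ x.1.disjUnion x.2 hst) ?_ ?_ ?_ ?_
  · intro R hR
    simp only [coe_filter, mem_univ, true_and, Set.mem_ofPred_eq] at hR ⊢
    rw [← card_parts_disjUnion hst, disjUnion_restrict hst hR.1, hR.2]
  · intro x hx
    simp only [coe_filter, mem_univ, true_and, Set.mem_ofPred_eq] at hx ⊢
    exact ⟨forall_subset_or_subset_disjUnion hst _ _, by rw [card_parts_disjUnion, hx]⟩
  · intro R hR
    exact disjUnion_restrict hst (mem_filter.1 hR).2.1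
  · intro x _
    exact Prod.ext (restrict_disjUnion_left hst _ _) (restrict_disjUnion_right hst _ _)

theorem card_filter_forall_subset_or_subset (hst : Disjoint s t) (k : ℕ) :
    #{R : Finpartition (s ∪ t) | (∀ p ∈ R.parts, p ⊆ s ∨ p ⊆ t) ∧ #R.parts = k} =
      ∑ ij ∈ antidiagonal k, stirling #s ij.1 * stirling #t ij.2 := by
  rw [card_filter_forall_subset_or_subset_eq_card_pairs hst,
    card_eq_sum_card_fiberwise (f := fun x ↦ (#x.1.parts, #x.2.parts)) (t := antidiagonal k)
      fun x hx ↦ by simpa using hx]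
  refine sum_congr rfl fun ij hij ↦ ?_
  rw [← card_filter_card_parts_eq_stirling, ← card_filter_card_parts_eq_stirling,
    ← card_product]
  congr 1
  ext x
  simp only [mem_filter, mem_univ, true_and, mem_product, Prod.ext_iff]
  rw [HasAntidiagonal.mem_antidiagonal] at hij
  omega

end DisjUnion

end Finpartition

section CompleteBipartite

variable {V W : Type*} [Fintype V] [Fintype W]

lemma forall_not_adj_completeBipartiteGraph_iff (p : Finset (V ⊕ W)) :
    (∀ a ∈ p, ∀ b ∈ p, ¬ (completeBipartiteGraph V W).Adj a b) ↔
      p ⊆ univ.map .inl ∨ p ⊆ univ.map .inr := by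
  constructor
  · intro h
    by_contra! hp
    obtain ⟨x | x, hx, hxl⟩ := not_subset.1 hp.1
    · exact hxl (mem_map_of_mem _ (mem_univ x))
    obtain ⟨y | y, hy, hyr⟩ := not_subset.1 hp.2
    · exact h _ hy _ hx (by simp)
    · exact hyr (mem_map_of_mem _ (mem_univ y))
  · rintro (hp | hp) a ha b hb <;>
      obtain ⟨a, -, rfl⟩ := mem_map.1 (hp ha) <;>
      obtain ⟨b, -, rfl⟩ := mem_map.1 (hp hb) <;> simp

theorem card_proper_finpartition_completeBipartiteGraph [DecidableEq V] [DecidableEq W]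
    (k : ℕ) :
    Nat.card {P : Finpartition (univ : Finset (V ⊕ W)) //
        (∀ p ∈ P.parts, ∀ a ∈ p, ∀ b ∈ p, ¬ (completeBipartiteGraph V W).Adj a b) ∧
          #P.parts = k} =
      ∑ ij ∈ antidiagonal k,
        stirling (Fintype.card V) ij.1 * stirling (Fintype.card W) ij.2 := by
  have hsides : (univ : Finset (V ⊕ W)) = univ.map .inl ∪ univ.map .inr := by
    rw [← disjUnion_eq_union _ _ (disjoint_map_inl_map_inr _ _), map_inl_disjUnion_map_inr,
      univ_disjSum_univ]
  simp_rw [forall_not_adj_completeBipartiteGraph_iff]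
  rw [Nat.card_eq_fintype_card, Fintype.card_subtype, hsides]
  refine (Eq.trans ?_ (Finpartition.card_filter_forall_subset_or_subset
    (disjoint_map_inl_map_inr (univ : Finset V) (univ : Finset W)) k)).trans ?_
  · congr -- the two filters differ only in their decidability instances
  · simp only [card_map, card_univ]

end CompleteBipartite

lemma sum_antidiagonal_mul_eq_sum_Icc {R : Type*} [CommSemiring R] (f : ℕ → R) (hf : f 0 = 0)
    (k : ℕ) :
    ∑ ij ∈ antidiagonal k, f ij.1 * f ij.2 = ∑ j ∈ Icc 1 (k - 1), f j * f (k - j) := by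
  rw [Nat.sum_antidiagonal_eq_sum_range_succ_mk]
  refine (sum_subset (fun j hj ↦ ?_) fun j hj hj' ↦ ?_).symm
  · rw [mem_Icc] at hj
    rw [mem_range]
    omega
  · rw [mem_range] at hj
    rw [mem_Icc] at hj'
    obtain rfl | rfl : j = 0 ∨ j = k := by omega
    · rw [hf, zero_mul]
    · rw [Nat.sub_self, hf, mul_zero]

lemma stirling_zero_right_of_ne_zero {n : ℕ} (hn : n ≠ 0) : stirling n 0 = 0 := by
  obtain ⟨m, rfl⟩ := Nat.exists_eq_succ_of_ne_zero hn
  rfl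

lemma stirling_succ_one (m : ℕ) : stirling (m + 1) 1 = 1 := by
  induction m with
  | zero => rfl
  | succ m ih => rw [stirling, ih]; rfl

lemma stirling_succ_two (m : ℕ) : (stirling (m + 1) 2 : ℤ) = 2 ^ m - 1 := by
  induction m with
  | zero => rfl
  | succ m ih =>
    rw [stirling, stirling_succ_one]
    push_cast
    rw [ih]
    ring

lemma two_mul_stirling_succ_three (m : ℕ) :
    2 * (stirling (m + 1) 3 : ℤ) = 3 ^ m - 2 ^ (m + 1) + 1 := by
  induction m with
  | zero => rfl
  | succ m ih =>
    rw [stirling]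
    push_cast
    linear_combination 3 * ih + 2 * stirling_succ_two m

lemma sum_Icc_stirling_mul_stirling_four {n : ℕ} (hn : 1 ≤ n) :
    ∑ j ∈ Icc 1 3, (stirling n j : ℤ) * stirling n (4 - j) =
      2 - 2 ^ (n + 1) + 3 ^ (n - 1) + 4 ^ (n - 1) := by
  obtain ⟨m, rfl⟩ := Nat.exists_eq_add_of_le' hn
  have h1 : (stirling (m + 1) 1 : ℤ) = 1 := by exact_mod_cast stirling_succ_one m
  have h4 : (4 : ℤ) ^ m = 2 ^ m * 2 ^ m := by rw [← mul_pow]; norm_num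
  rw [show Icc 1 3 = {1, 2, 3} by rfl, sum_insert (by decide), sum_insert (by decide),
    sum_singleton, Nat.add_sub_cancel]
  simp only [Nat.reduceSub, h1]
  linear_combination two_mul_stirling_succ_three m +
    ((stirling (m + 1) 2 : ℤ) + 2 ^ m - 1) * stirling_succ_two m - h4

/-- For `n ≥ 1`, the number of proper partitions of `K_{n,n}` into exactly `4` independent
sets equals `2 − 2^(n+1) + 3^(n−1) + 4^(n−1)`, i.e. `∑_{j=1}^{3} S(n,j)·S(n,4−j)` equals
this closed form. -/
theorem partitions_completeBipartite_four (n : ℕ) (hn : 1 ≤ n) :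
    (Nat.card {P : Finpartition (Finset.univ : Finset (Fin n ⊕ Fin n)) //
        (∀ p ∈ P.parts, ∀ a ∈ p, ∀ b ∈ p,
          ¬ (completeBipartiteGraph (Fin n) (Fin n)).Adj a b) ∧
        P.parts.card = 4} : ℤ) =
      2 - 2 ^ (n + 1) + 3 ^ (n - 1) + 4 ^ (n - 1) ∧
    (∑ j ∈ Finset.Icc 1 3, (stirling n j : ℤ) * stirling n (4 - j)) =
      2 - 2 ^ (n + 1) + 3 ^ (n - 1) + 4 ^ (n - 1) := by
  rw [card_proper_finpartition_completeBipartiteGraph, Fintype.card_fin,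
    sum_antidiagonal_mul_eq_sum_Icc _ (stirling_zero_right_of_ne_zero (by omega))]
  push_cast
  exact ⟨sum_Icc_stirling_mul_stirling_four hn, sum_Icc_stirling_mul_stirling_four hn⟩
end

section
/- For n ≥ 1, the sum over j = 1 to 4 of S(n,j)·S(n,5−j) equals 6^{n−1} − (5/3)·2^{2n−2} − 2·3^{n−1} + 2^{n+1} − 4/3. -/
lemma stirling_rec (n k : ℕ) :
    (stirling (n+1) (k+1) : ℚ) = (k+1 : ℚ) * stirling n (k+1) + stirling n k := by
  rw [show stirling (n+1) (k+1) = (k+1) * stirling n (k+1) + stirling n k from rfl]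
  push_cast; ring

lemma stirling_closed (m : ℕ) :
    (stirling (m+1) 1 : ℚ) = 1 ∧
    (stirling (m+1) 2 : ℚ) = 2 ^ m - 1 ∧
    (stirling (m+1) 3 : ℚ) = 3 ^ m / 2 - 2 ^ m + 1 / 2 ∧
    (stirling (m+1) 4 : ℚ) = 4 ^ m / 6 - 3 ^ m / 2 + 2 ^ m / 2 - 1 / 6 := by
  induction m with
  | zero => norm_num [stirling]
  | succ k ih =>
    obtain ⟨h1, h2, h3, h4⟩ := ih
    have h0 : (stirling (k+1) 0 : ℚ) = 0 := by norm_num [show stirling (k+1) 0 = 0 from rfl]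
    refine ⟨?_, ?_, ?_, ?_⟩
    · rw [show (1:ℕ) = 0 + 1 from rfl, stirling_rec, h1, h0]; ring
    · rw [show (2:ℕ) = 1 + 1 from rfl, stirling_rec, h2, h1]; push_cast; ring
    · rw [show (3:ℕ) = 2 + 1 from rfl, stirling_rec, h3, h2]; push_cast; ring
    · rw [show (4:ℕ) = 3 + 1 from rfl, stirling_rec, h4, h3]; push_cast; ring

/-- For `n ≥ 1`, `∑_{j=1}^{4} S(n,j)·S(n,5−j)
  = 6^(n−1) − (5/3)·2^(2n−2) − 2·3^(n−1) + 2^(n+1) − 4/3`. -/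
theorem stirling_sum_five (n : ℕ) (hn : 1 ≤ n) :
    (∑ j ∈ Finset.Icc 1 4, (stirling n j : ℚ) * stirling n (5 - j)) =
      6 ^ (n - 1) - (5 / 3) * 2 ^ (2 * n - 2) - 2 * 3 ^ (n - 1) + 2 ^ (n + 1) - 4 / 3 := by
  obtain ⟨m, rfl⟩ : ∃ m, n = m + 1 := ⟨n - 1, (Nat.succ_pred_eq_of_pos hn).symm⟩
  obtain ⟨h1, h2, h3, h4⟩ := stirling_closed m
  rw [show Finset.Icc 1 4 = ({1, 2, 3, 4} : Finset ℕ) from rfl,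
    Finset.sum_insert (by decide), Finset.sum_insert (by decide),
    Finset.sum_insert (by decide), Finset.sum_singleton]
  norm_num [h1, h2, h3, h4]
  have e2 : 2 * (m + 1) - 2 = 2 * m := by omega
  have e4 : (4 : ℚ) ^ m = 2 ^ m * 2 ^ m := by rw [← mul_pow]; norm_num
  have e6 : (6 : ℚ) ^ m = 2 ^ m * 3 ^ m := by rw [← mul_pow]; norm_num
  rw [e2, pow_mul]
  norm_num [e4, e6]
  ring
end

section
/- For n ≥ 2 with m = n − 1, the total number of proper partitions of the Mycielskian M(St_n) equals 2·Σ_{k=0}^{m} C(m,k)·B(2m − k) + Σ_{i=0}^{m} Σ_{j=0}^{m} C(m,i)·C(m,j)·B(2m − i − j), where B denotes the classical Bell number. -/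
/-- Vertices of the Mycielskian of the star: center `c`, leaves `v i`, copies `c'`, `v' i`,
and apex `u` (here `m` is the number of leaves). -/
inductive MycStarVertex (m : ℕ)
  | c : MycStarVertex m
  | v : Fin m → MycStarVertex m
  | c' : MycStarVertex m
  | v' : Fin m → MycStarVertex m
  | u : MycStarVertex m
  deriving DecidableEq, Fintype

/-- The Mycielskian of the star with `m` leaves: edges `c ~ v i`, `c ~ v' i`, `c' ~ v i`,
`u ~ v' i`, and `c' ~ u`. -/
def mycStar (m : ℕ) : SimpleGraph (MycStarVertex m) :=
  SimpleGraph.fromRel (fun x y =>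
    match x, y with
    | .c, .v _ => True
    | .c, .v' _ => True
    | .c', .v _ => True
    | .u, .v' _ => True
    | .c', .u => True
    | _, _ => False)

/-- The classical Bell numbers. -/
def bell (n : ℕ) : ℕ := ∑ k ∈ Finset.range (n + 1), stirling n k

/-!
Sort the partitions by the block containing a chosen vertex. The only non-neighbours of `c`
are the adjacent vertices `c'` and `u`, so the block of `c` is `{c}`, `{c, c'}` or `{c, u}`. Once
`c` is removed, every non-neighbour of `c'` lies in the independent set `{v'ᵢ}`, and every
non-neighbour of `u` in `{vᵢ}`: the block of `c'` is `c'` plus any `i` of the `v'ᵢ`, the block of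
`u` is `u` plus any `j` of the `vᵢ`, and the remaining `2m - i - j` leaves span no edge, so they
are partitioned in `B(2m - i - j)` ways. The three blocks of `c` give the three sums.

The Bell numbers defined through Stirling numbers agree with Mathlib's `Nat.bell` by the
recurrence `S(n+1, k+1) = ∑ⱼ C(n, j) S(j, k)`.
-/

open Finset

namespace Nat

theorem stirlingSecond_succ_succ_eq_sum_choose_mul (n k : ℕ) :
    stirlingSecond (n + 1) (k + 1) = ∑ j ∈ range (n + 1), n.choose j * stirlingSecond j k := by
  induction n generalizing k with
  | zero => cases k <;> rfl
  | succ n ih =>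
    have shifted : ∀ k, ∑ j ∈ range (n + 1), n.choose j * stirlingSecond (j + 1) k =
        k * stirlingSecond (n + 1) (k + 1) + stirlingSecond (n + 1) k := by
      rintro (_ | k)
      · simp
      · rw [ih, ih, mul_sum]
        simp only [stirlingSecond_succ_succ, mul_add, sum_add_distrib, mul_left_comm]
    have pascal := sum_choose_succ_mul (R := ℕ) (fun j _ => stirlingSecond j k) n
    simp only [Nat.cast_id] at pascal
    rw [pascal, ← ih, shifted, stirlingSecond_succ_succ]
    ring

end Nat

theorem stirling_eq_stirlingSecond : ∀ n k, stirling n k = Nat.stirlingSecond n k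
  | 0, 0 | 0, _ + 1 | _ + 1, 0 => rfl
  | n + 1, k + 1 => by
    rw [stirling, Nat.stirlingSecond_succ_succ, stirling_eq_stirlingSecond n (k + 1),
      stirling_eq_stirlingSecond n k]

theorem bell_eq_sum_stirlingSecond_of_le {n N : ℕ} (h : n ≤ N) :
    bell n = ∑ k ∈ range (N + 1), Nat.stirlingSecond n k := by
  rw [bell]
  simp only [stirling_eq_stirlingSecond]
  exact sum_subset (range_subset_range.2 (by omega)) fun k hk hkn =>
    Nat.stirlingSecond_eq_zero_of_lt (by simp only [mem_range] at hk hkn; omega)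

theorem bell_succ (n : ℕ) : bell (n + 1) = ∑ j ∈ range (n + 1), n.choose j * bell j := by
  calc bell (n + 1) = ∑ k ∈ range (n + 1), Nat.stirlingSecond (n + 1) (k + 1) := by
        rw [bell_eq_sum_stirlingSecond_of_le le_rfl, sum_range_succ']; simp
    _ = ∑ j ∈ range (n + 1), n.choose j * ∑ k ∈ range (n + 1), Nat.stirlingSecond j k := by
        simp only [Nat.stirlingSecond_succ_succ_eq_sum_choose_mul, mul_sum]
        exact sum_comm
    _ = _ := sum_congr rfl fun j hj => by
        rw [bell_eq_sum_stirlingSecond_of_le (by simpa [Nat.lt_succ_iff] using hj)]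

theorem bell_eq_nat_bell (n : ℕ) : bell n = n.bell := by
  induction n using Nat.strong_induction_on with
  | _ n ih =>
    rcases n with _ | n
    · simp [bell, stirling]
    rw [bell_succ, Nat.bell_succ, ← Nat.range_succ_eq_Iic, ← sum_range_reflect]
    refine sum_congr rfl fun j hj => ?_
    rw [mem_range] at hj
    rw [show n + 1 - 1 - j = n - j by omega, ih _ (by omega), Nat.choose_symm (by omega)]

namespace Finpartition

variable {α : Type*} [DecidableEq α] {a : α} {s t : Finset α}

theorem parts_avoid_of_mem (P : Finpartition s) (ht : t ∈ P.parts) :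
    (P.avoid t).parts = P.parts.erase t := by
  ext c
  simp only [mem_avoid, mem_erase]
  constructor
  · rintro ⟨d, hd, hdt, rfl⟩
    have hne : d ≠ t := by rintro rfl; exact hdt le_rfl
    rw [show d \ t = d from (P.disjoint hd ht hne).sdiff_eq_left]
    exact ⟨hne, hd⟩
  · rintro ⟨hne, hc⟩
    have hdisj : Disjoint c t := P.disjoint hc ht hne
    exact ⟨c, hc, fun hle => P.ne_bot hc (hdisj.eq_bot_of_le hle), hdisj.sdiff_eq_left⟩

/-- A partition of `insert a s` is the part of `a` (without `a`) and a partition of the rest. -/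
def insertEquivSigma (ha : a ∉ s) :
    Finpartition (insert a s) ≃ Σ t : s.powerset, Finpartition (s \ (t : Finset α)) where
  toFun P :=
    ⟨⟨(P.part a).erase a, mem_powerset.2 fun x hx => by
        obtain ⟨hxa, hx⟩ := mem_erase.1 hx
        exact (mem_insert.1 (P.part_subset a hx)).resolve_left hxa⟩,
      (P.avoid (P.part a)).copy (by
        ext x
        by_cases hxa : x = a
        · subst hxa; simp [P.mem_part_self.2 (mem_insert_self x s), ha]
        · simp [hxa])⟩
  invFun x :=
    x.2.extend (b := insert a (x.1 : Finset α)) (insert_ne_empty _ _)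
      (disjoint_insert_right.2 ⟨fun h => ha (mem_sdiff.1 h).1, sdiff_disjoint⟩)
      (by rw [sup_eq_union, union_insert, sdiff_union_of_subset (mem_powerset.1 x.1.2)])
  left_inv P := by
    have hpart : P.part a ∈ P.parts := P.part_mem.2 (mem_insert_self a s)
    ext1
    rw [extend_parts, copy_parts, parts_avoid_of_mem P hpart,
      insert_erase (P.mem_part_self.2 (mem_insert_self a s)), insert_erase hpart]
  right_inv := by
    rintro ⟨⟨t, ht⟩, Q⟩
    have hat : a ∉ t := fun h => ha (mem_powerset.1 ht h)
    have hQ : insert a t ∉ Q.parts := fun h => ha (mem_sdiff.1 (Q.le h (mem_insert_self a t))).1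
    have sigma_ext : ∀ {t'} (ht' : t' ∈ s.powerset) (Q' : Finpartition (s \ t')), t' = t →
        Q'.parts = Q.parts →
        (⟨⟨t', ht'⟩, Q'⟩ : Σ t : s.powerset, Finpartition (s \ (t : Finset α))) =
          ⟨⟨t, ht⟩, Q⟩ := by
      rintro t' ht' Q' rfl h
      rw [Finpartition.ext h]
    have hpart : ∀ P : Finpartition (insert a s), P.parts = insert (insert a t) Q.parts →
        P.part a = insert a t := fun P hP =>
      P.part_eq_of_mem (by rw [hP]; exact mem_insert_self _ _) (mem_insert_self a t)
    refine sigma_ext _ _ ?_ ?_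
    · rw [hpart _ (extend_parts _ _ _ _), erase_insert hat]
    · rw [copy_parts, parts_avoid_of_mem _ ((part_mem _).2 (mem_insert_self a s)),
        hpart _ (extend_parts _ _ _ _), extend_parts, erase_insert hQ]

theorem parts_eq_insert_insertEquivSigma (ha : a ∉ s) (P : Finpartition (insert a s)) :
    P.parts = insert (insert a ((insertEquivSigma ha P).1 : Finset α))
      (insertEquivSigma ha P).2.parts := by
  conv_lhs => rw [← (insertEquivSigma ha).symm_apply_apply P]
  rfl

theorem card_insert_subtype_forall_parts (p : Finset α → Prop) (ha : a ∉ s)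
    {T : Finset (Finset α)} (hTs : T ⊆ s.powerset) (hT : ∀ t ⊆ s, p (insert a t) ↔ t ∈ T) :
    Nat.card {P : Finpartition (insert a s) // ∀ q ∈ P.parts, p q} =
      ∑ t ∈ T, Nat.card {Q : Finpartition (s \ t) // ∀ q ∈ Q.parts, p q} := by
  let F (t : s.powerset) := {Q : Finpartition (s \ (t : Finset α)) //
    p (insert a (t : Finset α)) ∧ ∀ q ∈ Q.parts, p q}
  let e : {P : Finpartition (insert a s) // ∀ q ∈ P.parts, p q} ≃ Σ t, F t :=
    ((insertEquivSigma ha).subtypeEquiv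
      (q := fun x => p (insert a (x.1 : Finset α)) ∧ ∀ q ∈ x.2.parts, p q) fun P => by
        rw [parts_eq_insert_insertEquivSigma ha P, forall_mem_insert]).trans
    { toFun x := ⟨x.1.1, x.1.2, x.2⟩
      invFun x := ⟨⟨x.1, x.2.1⟩, x.2.2⟩
      left_inv _ := rfl
      right_inv _ := rfl }
  rw [Nat.card_congr e, Nat.card_sigma, sum_coe_sort s.powerset fun t => Nat.card
    {Q : Finpartition (s \ t) // p (insert a t) ∧ ∀ q ∈ Q.parts, p q}]
  refine (sum_subset hTs fun t hts htT => ?_).symm.trans (sum_congr rfl fun t htT => ?_)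
  · have : ¬ p (insert a t) := fun h => htT ((hT t (mem_powerset.1 hts)).1 h)
    simp [this]
  · have : p (insert a t) := (hT t (mem_powerset.1 (hTs htT))).2 htT
    simp only [this, true_and]

theorem card_eq_bell (s : Finset α) : Nat.card (Finpartition s) = (#s).bell := by
  induction hn : #s using Nat.strong_induction_on generalizing s with
  | _ n ih =>
    rcases n with _ | n
    · rw [card_eq_zero.1 hn, Nat.bell_zero]
      exact Nat.card_unique (α := Finpartition (⊥ : Finset α))
    obtain ⟨a, s, ha, rfl, hs⟩ := card_eq_succ.1 hn
    have count := card_insert_subtype_forall_parts (fun _ => True) ha subset_rfl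
      fun t hts => by simpa using hts
    simp only [forall_const, implies_true,
      Nat.card_congr (Equiv.subtypeUnivEquiv fun _ => trivial)] at count
    calc Nat.card (Finpartition (insert a s))
        = ∑ t ∈ s.powerset, Nat.card (Finpartition (s \ t)) := count
      _ = ∑ t ∈ s.powerset, (n - #t).bell := sum_congr rfl fun t ht =>
          ih _ (by omega) _ (by rw [card_sdiff_of_subset (mem_powerset.1 ht), hs])
      _ = (n + 1).bell := by
          rw [sum_powerset_apply_card (fun k => (n - k).bell), hs, Nat.bell_succ,
            Nat.range_succ_eq_Iic]
          simp only [smul_eq_mul]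

end Finpartition

namespace SimpleGraph

variable {α : Type*} (G : SimpleGraph α)

theorem isIndepSet_coe_finset_iff {s : Finset α} :
    G.IsIndepSet (s : Set α) ↔ ∀ a ∈ s, ∀ b ∈ s, ¬ G.Adj a b :=
  ⟨fun h _ ha _ hb hab => h ha hb hab.ne hab, fun h a ha b hb _ => h a ha b hb⟩

variable {G}

theorem isIndepSet_insert_iff_subset {a : α} {N t : Set α} (hN : G.IsIndepSet N)
    (haN : ∀ x ∈ N, ¬ G.Adj a x) (hta : ∀ x ∈ t, x ∉ N → G.Adj a x) :
    G.IsIndepSet (insert a t) ↔ t ⊆ N := by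
  refine ⟨fun h x hxt => ?_, fun htN => ?_⟩
  · by_contra hxN
    have hax := hta x hxt hxN
    exact h (Set.mem_insert a t) (Set.mem_insert_of_mem a hxt) hax.ne hax
  · exact (Set.Pairwise.insert hN fun x hx _ => ⟨haN x hx, fun h => haN x hx h.symm⟩).mono
      (Set.insert_subset_insert htN)

variable [DecidableEq α]

variable (G) in
noncomputable def indepPartitionCount (s : Finset α) : ℕ :=
  Nat.card {P : Finpartition s // ∀ q ∈ P.parts, G.IsIndepSet (q : Set α)}

theorem indepPartitionCount_eq_card_forall_not_adj (s : Finset α) :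
    G.indepPartitionCount s =
      Nat.card {P : Finpartition s // ∀ q ∈ P.parts, ∀ a ∈ q, ∀ b ∈ q, ¬ G.Adj a b} :=
  Nat.card_congr (Equiv.subtypeEquivRight fun _ =>
    forall₂_congr fun _ _ => isIndepSet_coe_finset_iff G)

theorem indepPartitionCount_of_isIndepSet {s : Finset α} (hs : G.IsIndepSet (s : Set α)) :
    G.indepPartitionCount s = (#s).bell := by
  rw [indepPartitionCount, ← Finpartition.card_eq_bell]
  exact Nat.card_congr (Equiv.subtypeUnivEquiv fun P q hq =>
    hs.mono (Finset.coe_subset.2 (P.le hq)))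

theorem indepPartitionCount_insert {a : α} {s : Finset α} (ha : a ∉ s)
    {T : Finset (Finset α)} (hTs : T ⊆ s.powerset)
    (hT : ∀ t ⊆ s, G.IsIndepSet ((insert a t : Finset α) : Set α) ↔ t ∈ T) :
    G.indepPartitionCount (insert a s) = ∑ t ∈ T, G.indepPartitionCount (s \ t) :=
  Finpartition.card_insert_subtype_forall_parts _ ha hTs hT

theorem indepPartitionCount_insert_of_adj_sdiff {a : α} {s N : Finset α} (ha : a ∉ s)
    (hNs : N ⊆ s) (hN : G.IsIndepSet (N : Set α)) (haN : ∀ x ∈ N, ¬ G.Adj a x)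
    (has : ∀ x ∈ s, x ∉ N → G.Adj a x) :
    G.indepPartitionCount (insert a s) = ∑ t ∈ N.powerset, G.indepPartitionCount (s \ t) :=
  indepPartitionCount_insert ha (powerset_mono.2 hNs) fun t hts => by
    rw [coe_insert, isIndepSet_insert_iff_subset hN haN fun x hx => has x (hts hx), mem_powerset,
      coe_subset]

theorem indepPartitionCount_insert_of_isIndepSet {a : α} {s N : Finset α} (ha : a ∉ s)
    (hs : G.IsIndepSet (s : Set α)) (hNs : N ⊆ s) (haN : ∀ x ∈ N, ¬ G.Adj a x)
    (has : ∀ x ∈ s, x ∉ N → G.Adj a x) :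
    G.indepPartitionCount (insert a s) =
      ∑ k ∈ range (#N + 1), (#N).choose k * (#s - k).bell := by
  rw [indepPartitionCount_insert_of_adj_sdiff ha hNs (hs.mono (coe_subset.2 hNs)) haN has]
  calc ∑ t ∈ N.powerset, G.indepPartitionCount (s \ t)
      = ∑ t ∈ N.powerset, (#s - #t).bell := sum_congr rfl fun t ht => by
        rw [indepPartitionCount_of_isIndepSet (hs.mono (coe_subset.2 sdiff_subset)),
          card_sdiff_of_subset ((mem_powerset.1 ht).trans hNs)]
    _ = _ := by simp only [sum_powerset_apply_card (fun k => (#s - k).bell), smul_eq_mul]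

end SimpleGraph

namespace MycStarVertex

variable {m : ℕ}

def leaves (m : ℕ) : Finset (MycStarVertex m) := univ.map ⟨v, fun _ _ h => v.inj h⟩

def leafCopies (m : ℕ) : Finset (MycStarVertex m) := univ.map ⟨v', fun _ _ h => v'.inj h⟩

@[simp]
theorem mem_leaves {x : MycStarVertex m} : x ∈ leaves m ↔ ∃ i, v i = x := by
  simp only [leaves, mem_map, mem_univ, true_and]; rfl

@[simp]
theorem mem_leafCopies {x : MycStarVertex m} : x ∈ leafCopies m ↔ ∃ i, v' i = x := by
  simp only [leafCopies, mem_map, mem_univ, true_and]; rfl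

@[simp]
theorem card_leaves : #(leaves m) = m := by simp [leaves]

@[simp]
theorem card_leafCopies : #(leafCopies m) = m := by simp [leafCopies]

theorem disjoint_leaves_leafCopies : Disjoint (leaves m) (leafCopies m) :=
  disjoint_left.2 (by simp)

theorem card_leaves_union_leafCopies : #(leaves m ∪ leafCopies m) = 2 * m := by
  rw [card_union_of_disjoint disjoint_leaves_leafCopies, card_leaves, card_leafCopies, two_mul]

theorem isIndepSet_leaves_union_leafCopies :
    (mycStar m).IsIndepSet ↑(leaves m ∪ leafCopies m) := by
  rw [SimpleGraph.isIndepSet_coe_finset_iff]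
  simp only [mem_union, mem_leaves, mem_leafCopies]
  rintro _ (⟨i, rfl⟩ | ⟨i, rfl⟩) _ (⟨j, rfl⟩ | ⟨j, rfl⟩) <;> simp [mycStar]

end MycStarVertex

open MycStarVertex SimpleGraph

section MycStarCount

variable {m : ℕ}

theorem indepPartitionCount_mycStar_insert_u {X : Finset (MycStarVertex m)}
    (hlX : leaves m ⊆ X) (hX : X ⊆ leaves m ∪ leafCopies m) :
    (mycStar m).indepPartitionCount (insert u X) =
      ∑ k ∈ range (m + 1), m.choose k * (#X - k).bell := by
  rw [indepPartitionCount_insert_of_isIndepSet (N := leaves m) (fun h => by simpa using hX h)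
    (isIndepSet_leaves_union_leafCopies.mono (coe_subset.2 hX)) hlX, card_leaves]
  · simp [mycStar]
  · intro x hx hxl
    have hxW := hX hx
    simp only [mem_union, mem_leaves, mem_leafCopies] at hxW hxl
    obtain ⟨i, rfl⟩ | ⟨i, rfl⟩ := hxW
    · exact absurd ⟨i, rfl⟩ hxl
    · simp [mycStar]

theorem indepPartitionCount_mycStar_insert_c' {X : Finset (MycStarVertex m)}
    (hlX : leafCopies m ⊆ X) (hX : X ⊆ leaves m ∪ leafCopies m) :
    (mycStar m).indepPartitionCount (insert c' X) =
      ∑ k ∈ range (m + 1), m.choose k * (#X - k).bell := by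
  rw [indepPartitionCount_insert_of_isIndepSet (N := leafCopies m) (fun h => by simpa using hX h)
    (isIndepSet_leaves_union_leafCopies.mono (coe_subset.2 hX)) hlX, card_leafCopies]
  · simp [mycStar]
  · intro x hx hxl
    have hxW := hX hx
    simp only [mem_union, mem_leaves, mem_leafCopies] at hxW hxl
    obtain ⟨i, rfl⟩ | ⟨i, rfl⟩ := hxW
    · simp [mycStar]
    · exact absurd ⟨i, rfl⟩ hxl

theorem indepPartitionCount_mycStar_insert_c'_insert_u :
    (mycStar m).indepPartitionCount (insert c' (insert u (leaves m ∪ leafCopies m))) =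
      ∑ i ∈ range (m + 1), m.choose i *
        ∑ j ∈ range (m + 1), m.choose j * (2 * m - i - j).bell := by
  rw [indepPartitionCount_insert_of_adj_sdiff (N := leafCopies m) (by simp)
    (subset_union_right.trans (subset_insert _ _))
    (isIndepSet_leaves_union_leafCopies.mono (coe_subset.2 subset_union_right))
    (by simp [mycStar])]
  · calc ∑ t ∈ (leafCopies m).powerset,
          (mycStar m).indepPartitionCount (insert u (leaves m ∪ leafCopies m) \ t)
        = ∑ t ∈ (leafCopies m).powerset,
            ∑ j ∈ range (m + 1), m.choose j * (2 * m - #t - j).bell :=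
          sum_congr rfl fun t ht => by
            have htl := mem_powerset.1 ht
            rw [insert_sdiff_of_notMem _ fun hu => by simpa using htl hu,
              indepPartitionCount_mycStar_insert_u
                (subset_sdiff.2 ⟨subset_union_left, disjoint_leaves_leafCopies.mono_right htl⟩)
                sdiff_subset,
              card_sdiff_of_subset (htl.trans subset_union_right), card_leaves_union_leafCopies]
      _ = _ := by
          rw [sum_powerset_apply_card
            (fun i => ∑ j ∈ range (m + 1), m.choose j * (2 * m - i - j).bell), card_leafCopies]
          simp only [smul_eq_mul]
  · intro x hx hxl
    simp only [mem_insert, mem_union, mem_leaves, mem_leafCopies] at hx hxl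
    obtain rfl | ⟨i, rfl⟩ | ⟨i, rfl⟩ := hx
    · simp [mycStar]
    · simp [mycStar]
    · exact absurd ⟨i, rfl⟩ hxl

theorem isIndepSet_mycStar_insert_c_iff {t : Finset (MycStarVertex m)}
    (ht : t ⊆ insert c' (insert u (leaves m ∪ leafCopies m))) :
    (mycStar m).IsIndepSet ↑(insert c t) ↔ t ∈ ({∅, {c'}, {u}} : Finset _) := by
  rw [isIndepSet_coe_finset_iff]
  refine ⟨fun h => ?_, fun hT => ?_⟩
  · have hcu : ∀ x ∈ t, x = c' ∨ x = u := fun x hx => by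
      have hx' := ht hx
      simp only [mem_insert, mem_union, mem_leaves, mem_leafCopies] at hx'
      obtain hx' | hx' | ⟨i, rfl⟩ | ⟨i, rfl⟩ := hx'
      · exact .inl hx'
      · exact .inr hx'
      all_goals
        exact absurd (by simp [mycStar]) (h c (mem_insert_self c t) _ (mem_insert_of_mem hx))
    by_cases hc' : c' ∈ t
    · have hu : u ∉ t := fun hu =>
        h c' (mem_insert_of_mem hc') u (mem_insert_of_mem hu) (by simp [mycStar])
      rw [eq_singleton_iff_unique_mem.2 ⟨hc', fun x hx => (hcu x hx).resolve_right
        (by rintro rfl; exact hu hx)⟩]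
      simp
    · obtain rfl | rfl := subset_singleton_iff.1 fun x hx =>
        mem_singleton.2 ((hcu x hx).resolve_left (by rintro rfl; exact hc' hx))
      all_goals simp
  · simp only [mem_insert, mem_singleton] at hT
    rcases hT with rfl | rfl | rfl <;> simp [mycStar]

theorem indepPartitionCount_mycStar_univ :
    (mycStar m).indepPartitionCount univ =
      (mycStar m).indepPartitionCount (insert c' (insert u (leaves m ∪ leafCopies m))) +
      (mycStar m).indepPartitionCount (insert u (leaves m ∪ leafCopies m)) +
      (mycStar m).indepPartitionCount (insert c' (leaves m ∪ leafCopies m)) := by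
  have huniv : (univ : Finset (MycStarVertex m)) =
      insert c (insert c' (insert u (leaves m ∪ leafCopies m))) := by
    ext x; cases x <;> simp
  rw [huniv, indepPartitionCount_insert (by simp) ?_ fun _ => isIndepSet_mycStar_insert_c_iff,
    sum_insert (by simp), sum_insert (by simp), sum_singleton, sdiff_empty, add_assoc]
  · congr 3 <;> ext x <;> cases x <;> simp
  · intro t
    simp only [mem_insert, mem_singleton]
    rintro (rfl | rfl | rfl) <;> simp

end MycStarCount

theorem bell_mycStar_general (m : ℕ) :
    Nat.card {P : Finpartition (Finset.univ : Finset (MycStarVertex m)) //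
        ∀ p ∈ P.parts, ∀ a ∈ p, ∀ b ∈ p, ¬ (mycStar m).Adj a b} =
      2 * (∑ k ∈ Finset.range (m + 1), m.choose k * bell (2 * m - k)) +
      ∑ i ∈ Finset.range (m + 1), ∑ j ∈ Finset.range (m + 1),
        m.choose i * m.choose j * bell (2 * m - i - j) := by
  rw [← indepPartitionCount_eq_card_forall_not_adj, indepPartitionCount_mycStar_univ, indepPartitionCount_mycStar_insert_c'_insert_u,
    indepPartitionCount_mycStar_insert_u subset_union_left subset_rfl,
    indepPartitionCount_mycStar_insert_c' subset_union_right subset_rfl,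
    card_leaves_union_leafCopies]
  simp only [bell_eq_nat_bell, mul_assoc, ← mul_sum]
  ring

/-- For `n ≥ 2` with `m = n − 1`, the total number of proper partitions of the Mycielskian
`M(St_n)` equals
`2·∑_{k=0}^{m} C(m,k)·B(2m−k) + ∑_{i=0}^{m} ∑_{j=0}^{m} C(m,i)·C(m,j)·B(2m−i−j)`. -/
theorem bell_mycStar (n m : ℕ) (hn : 2 ≤ n) (hm : m = n - 1) :
    Nat.card {P : Finpartition (Finset.univ : Finset (MycStarVertex m)) //
        ∀ p ∈ P.parts, ∀ a ∈ p, ∀ b ∈ p, ¬ (mycStar m).Adj a b} =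
      2 * (∑ k ∈ Finset.range (m + 1), m.choose k * bell (2 * m - k)) +
      ∑ i ∈ Finset.range (m + 1), ∑ j ∈ Finset.range (m + 1),
        m.choose i * m.choose j * bell (2 * m - i - j) :=
  bell_mycStar_general m
end
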